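/- Let $C$ be a closed convex set in $\mathbb{R}^d$ and let $K$ be a totally disconnected Borel set such that $\operatorname{conv}(K) = C$ and $\pi_W(K) = \pi_W(C)$ for every one-dimensional linear subspace $W$ of $\mathbb{R}^d$. Then every exposed point of $C$ belongs to $K$, and the set of exposed points of $C$ is totally disconnected. -/

import Mathlib

open Set Module

/-- Orthogonal projection onto a subspace, viewed as a map of the ambient space. -/
noncomputable def orthProj {d : ℕ} (W : Submodule ℝ (EuclideanSpace ℝ (Fin d)))
    (x : EuclideanSpace ℝ (Fin d)) : EuclideanSpace ℝ (Fin d) :=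
  (W.orthogonalProjection x : EuclideanSpace ℝ (Fin d))

/-- The exposing functional of `x` takes the value `l x` on `C` only at `x`, and by `hK` also
somewhere on `K`. -/
theorem mem_of_mem_exposedPoints_of_image_subset {E : Type*} [AddCommGroup E]
    [TopologicalSpace E] [Module ℝ E] {C K : Set E} (hKC : K ⊆ C)
    (hK : ∀ l : StrongDual ℝ E, l '' C ⊆ l '' K) {x : E} (hx : x ∈ C.exposedPoints ℝ) :
    x ∈ K := by
  obtain ⟨hxC, l, hl⟩ := hx
  obtain ⟨k, hkK, hkx⟩ := hK l (mem_image_of_mem l hxC)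
  obtain rfl : k = x := (hl k (hKC hkK)).2 hkx.ge
  exact hkK

theorem inner_orthProj_of_mem {d : ℕ} {W : Submodule ℝ (EuclideanSpace ℝ (Fin d))}
    {v : EuclideanSpace ℝ (Fin d)} (hv : v ∈ W) (x : EuclideanSpace ℝ (Fin d)) :
    inner ℝ v (orthProj W x) = inner ℝ v x :=
  W.inner_orthogonalProjectionOnto_eq_of_mem_left ⟨v, hv⟩ x

/-- Every continuous functional is `⟪v, ·⟫`, which factors through the projection onto the
line `ℝ ∙ v`; so equal projections on all lines give equal images under all functionals. -/
theorem image_subset_image_of_orthProj_image_eq {d : ℕ} {C K : Set (EuclideanSpace ℝ (Fin d))}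
    (hK : K.Nonempty)
    (hKproj : ∀ W : Submodule ℝ (EuclideanSpace ℝ (Fin d)), finrank ℝ W = 1 →
      orthProj W '' K = orthProj W '' C)
    (l : StrongDual ℝ (EuclideanSpace ℝ (Fin d))) : l '' C ⊆ l '' K := by
  set v := (InnerProductSpace.toDual ℝ _).symm l
  have hl : ∀ y, l y = inner ℝ v y := fun y => (InnerProductSpace.toDual_symm_apply).symm
  rintro _ ⟨y, hyC, rfl⟩
  by_cases hv : v = 0
  · obtain ⟨k, hk⟩ := hK
    exact ⟨k, hk, by simp only [hl, hv, inner_zero_left]⟩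
  · have hy : orthProj (ℝ ∙ v) y ∈ orthProj (ℝ ∙ v) '' K := by
      rw [hKproj _ (finrank_span_singleton hv)]
      exact mem_image_of_mem _ hyC
    obtain ⟨k, hkK, hky⟩ := hy
    refine ⟨k, hkK, ?_⟩
    have hvW : v ∈ ℝ ∙ v := Submodule.mem_span_singleton_self v
    rw [hl, hl, ← inner_orthProj_of_mem hvW, hky, inner_orthProj_of_mem hvW]

theorem exposedPoints_subset_of_fractalDecomposable_general
    (d : ℕ) (C : Set (EuclideanSpace ℝ (Fin d)))
    (K : Set (EuclideanSpace ℝ (Fin d)))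
    (hKtd : IsTotallyDisconnected K)
    (hKhull : convexHull ℝ K = C)
    (hKproj : ∀ (W : Submodule ℝ (EuclideanSpace ℝ (Fin d))), finrank ℝ W = 1 →
      orthProj W '' K = orthProj W '' C) :
    C.exposedPoints ℝ ⊆ K ∧ IsTotallyDisconnected (C.exposedPoints ℝ) := by
  have hKC : K ⊆ C := hKhull ▸ subset_convexHull ℝ K
  have hsub : C.exposedPoints ℝ ⊆ K := by
    intro x hx
    have hK : K.Nonempty := by
      rw [← convexHull_nonempty_iff (𝕜 := ℝ), hKhull]
      exact ⟨x, hx.1⟩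
    exact mem_of_mem_exposedPoints_of_image_subset hKC
      (image_subset_image_of_orthProj_image_eq hK hKproj) hx
  exact ⟨hsub, fun t ht hpc => hKtd t (ht.trans hsub) hpc⟩

/-- If a closed convex set `C` is 1-dimensional fractal-decomposable with a totally
disconnected Borel set `K`, then every exposed point of `C` lies in `K`, and the set of
exposed points of `C` is totally disconnected. -/
theorem exposedPoints_subset_of_fractalDecomposable
    (d : ℕ) (hd : 1 ≤ d) (C : Set (EuclideanSpace ℝ (Fin d)))
    (hCcl : IsClosed C) (hCconv : Convex ℝ C)
    (K : Set (EuclideanSpace ℝ (Fin d))) (hKborel : MeasurableSet K)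
    (hKtd : IsTotallyDisconnected K)
    (hKhull : convexHull ℝ K = C)
    (hKproj : ∀ (W : Submodule ℝ (EuclideanSpace ℝ (Fin d))), finrank ℝ W = 1 →
      orthProj W '' K = orthProj W '' C) :
    C.exposedPoints ℝ ⊆ K ∧ IsTotallyDisconnected (C.exposedPoints ℝ) :=
  exposedPoints_subset_of_fractalDecomposable_general d C K hKtd hKhull hKproj
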